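/- arXiv:2208.12864 — 3 statements merged into one kernel-verified Lean document; each statement's English description precedes it below -/
import Mathlib

section
/- In any tree T, for every leaf x of T there exists a matching in T that saturates x and all internal (non-leaf) vertices of T. -/
/-!
Induct on the number of vertices, deleting a leaf `ℓ ≠ x` with neighbour `p`. This leaves a
smaller tree in which every internal vertex of the original tree other than `p` is still internal,
so induction yields a matching saturating `x` and those vertices. If `p` is not yet saturated, the
pendant edge `pℓ` is disjoint from this matching and can be added. Phrased for an arbitrary vertex
`x` of a nontrivial tree, the induction bottoms out at the single edge on two vertices.
-/

namespace SimpleGraph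

variable {V : Type*} {G : SimpleGraph V}

lemma Subgraph.IsMatching.exists_extend_of_induce_compl {ℓ p : V} (hpℓ : G.Adj p ℓ)
    {M : (G.induce {ℓ}ᶜ).Subgraph} (hM : M.IsMatching) :
    ∃ M' : G.Subgraph, M'.IsMatching ∧ p ∈ M'.verts ∧ ∀ v ∈ M.verts, (v : V) ∈ M'.verts := by
  set N := M.map (Embedding.induce {ℓ}ᶜ).toHom
  have hN : N.IsMatching := hM.map _ (Embedding.induce (G := G) _).injective
  have hNverts : ∀ v ∈ M.verts, (v : V) ∈ N.verts := fun v hv => ⟨v, hv, rfl⟩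
  by_cases hp : p ∈ N.verts
  · exact ⟨N, hN, hp, hNverts⟩
  have hℓ : ℓ ∉ N.verts := by
    rintro ⟨⟨w, hw⟩, -, hwℓ⟩
    exact hw hwℓ
  have hd : Disjoint N.support (G.subgraphOfAdj hpℓ).support := by
    rw [hN.support_eq_verts, (Subgraph.IsMatching.subgraphOfAdj hpℓ).support_eq_verts,
      subgraphOfAdj_verts, Set.disjoint_insert_right, Set.disjoint_singleton_right]
    exact ⟨hp, hℓ⟩
  refine ⟨N ⊔ G.subgraphOfAdj hpℓ, hN.sup (.subgraphOfAdj hpℓ) hd, Or.inr (by simp),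
    fun v hv => Or.inl (hNverts v hv)⟩

theorem IsTree.exists_isMatching_mem_verts_of_two_le_degree [Fintype V] [DecidableRel G.Adj]
    [Nontrivial V] (hG : G.IsTree) (x : V) :
    ∃ M : G.Subgraph, M.IsMatching ∧ x ∈ M.verts ∧ ∀ v, 2 ≤ G.degree v → v ∈ M.verts := by
  induction hn : Fintype.card V using Nat.strong_induction_on generalizing V with | _ n ih
  by_cases hn2 : n ≤ 2
  · obtain ⟨y, hxy⟩ := hG.connected.preconnected.exists_adj_of_nontrivial x
    refine ⟨G.subgraphOfAdj hxy, .subgraphOfAdj hxy, by simp, fun v hv => ?_⟩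
    have := G.degree_lt_card_verts v
    omega
  obtain ⟨ℓ, hℓx, hℓ⟩ : ∃ ℓ, ℓ ≠ x ∧ G.degree ℓ = 1 := by
    obtain ⟨u, w, huw, hu, hw⟩ := hG.exists_ne_and_degree_eq_one
    by_cases hux : u = x
    · exact ⟨w, hux ▸ huw.symm, hw⟩
    · exact ⟨u, hux, hu⟩
  obtain ⟨p, hℓp, hp⟩ := degree_eq_one_iff_existsUnique_adj.mp hℓ
  classical
  have hT : (G.induce {ℓ}ᶜ).IsTree :=
    ⟨hG.connected.induce_compl_singleton_of_degree_eq_one hℓ, hG.isAcyclic.induce _⟩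
  have hcard : Fintype.card ({ℓ}ᶜ : Set V) = n - 1 := by
    rw [Fintype.card_compl_set, Set.card_singleton, hn]
  have : Nontrivial ({ℓ}ᶜ : Set V) := Fintype.one_lt_card_iff_nontrivial.mp (by omega)
  obtain ⟨M, hM, hxM, hM_internal⟩ := ih (n - 1) (by omega) hT ⟨x, hℓx.symm⟩ hcard
  obtain ⟨M', hM', hpM', hMM'⟩ := hM.exists_extend_of_induce_compl hℓp.symm
  refine ⟨M', hM', hMM' _ hxM, fun v hv => ?_⟩
  by_cases hvp : v = p
  · exact hvp ▸ hpM'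
  have hvℓ : v ≠ ℓ := by
    rintro rfl
    omega
  have hsub : G.neighborSet v ⊆ {ℓ}ᶜ := fun w hvw (hwℓ : w = ℓ) =>
    hvp (hp v (hwℓ ▸ hvw).symm)
  exact hMM' ⟨v, hvℓ⟩ (hM_internal _ (by rwa [degree_induce_of_neighborSet_subset hsub]))

end SimpleGraph

/-- In any tree `T`, for every leaf `x` there is a matching saturating `x`
and all internal (non-leaf) vertices. -/
theorem stmt_0 {V : Type*} [Fintype V] (G : SimpleGraph V) [DecidableRel G.Adj]
    (hT : G.IsTree) (x : V) (hx : G.degree x = 1) :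
    ∃ M : G.Subgraph, M.IsMatching ∧ x ∈ M.verts ∧
      ∀ v : V, 2 ≤ G.degree v → v ∈ M.verts := by
  obtain ⟨y, hxy⟩ := (G.degree_pos_iff_exists_adj x).mp (by omega)
  have : Nontrivial V := ⟨⟨x, y, hxy.ne⟩⟩
  exact hT.exists_isMatching_mem_verts_of_two_le_degree x
end

section
/- In a finite tree T, if M is a maximum matching and P is an M-alternating path starting at an M-unsaturated leaf ℓ and following edges alternately not-in-M/in-M as long as possible, then P ends at a leaf of T. -/
/-- A walk is `M`-alternating from its start: its first edge is not in `M`, and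
consecutive edges alternate between non-`M` and `M` edges. -/
def AltFrom {V : Type*} (G : SimpleGraph V) (M : G.Subgraph) {a b : V}
    (P : G.Walk a b) : Prop :=
  (∀ e : Sym2 V, P.edges.head? = some e → e ∉ M.edgeSet) ∧
  List.Chain' (fun e f => (e ∈ M.edgeSet ↔ f ∉ M.edgeSet)) P.edges

/-- In a finite tree with a matching `M` saturating all internal vertices, a maximal
`M`-alternating path starting at an `M`-unsaturated leaf ends at a leaf. -/
theorem stmt_12 {V : Type*} [Fintype V] (G : SimpleGraph V) [DecidableRel G.Adj]
    (hG : G.IsTree) (M : G.Subgraph) (hM : M.IsMatching)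
    (hsat : ∀ u : V, 2 ≤ G.degree u → u ∈ M.verts)
    (ℓ v : V) (hℓdeg : G.degree ℓ = 1) (hℓ : ℓ ∉ M.verts)
    (P : G.Walk ℓ v) (hP : P.IsPath) (halt : AltFrom G M P)
    (hmax : ∀ (w : V) (h : G.Adj v w),
      ¬ ((P.concat h).IsPath ∧ AltFrom G M (P.concat h))) :
    G.degree v = 1 := by
  classical
  by_cases hnil : P.Nil
  · obtain rfl := hnil.eq
    exact hℓdeg
  · have hlen : P.edges ≠ [] := by
      intro h
      apply hnil
      rw [SimpleGraph.Walk.nil_iff_length_eq, ← P.length_edges, h]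
      rfl
    have hrevnil : ¬ P.reverse.Nil := by
      rw [SimpleGraph.Walk.nil_iff_length_eq, SimpleGraph.Walk.length_reverse]
      rwa [SimpleGraph.Walk.nil_iff_length_eq] at hnil
    obtain ⟨u₀, hadj₀, q, hq⟩ := SimpleGraph.Walk.not_nil_iff.mp hrevnil
    by_contra hne
    have h2 : 2 ≤ G.degree v := by
      have h1 : 0 < G.degree v := (G.degree_pos_iff_exists_adj v).mpr ⟨u₀, hadj₀⟩
      omega
    have hvM := hsat v h2
    obtain ⟨u, huAdj, huuniq⟩ := hM hvM
    set e := P.edges.getLast hlen with he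
    have hlast : P.edges.getLast? = some e := List.getLast?_eq_getLast_of_ne_nil hlen
    have key : ∀ w (h : G.Adj v w), (e ∈ M.edgeSet ↔ s(v,w) ∉ M.edgeSet) → False := by
      intro w h hR
      by_cases hw : w ∈ P.support
      · have hps : P.dropUntil w hw = SimpleGraph.Walk.cons h.symm SimpleGraph.Walk.nil := by
          have := hG.IsAcyclic.path_unique ⟨P.dropUntil w hw, hP.dropUntil hw⟩
            (SimpleGraph.Path.singleton h.symm)
          exact congrArg Subtype.val this
        have hPe : P.edges = (P.takeUntil w hw).edges ++ [s(w,v)] := by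
          conv_lhs => rw [← P.take_spec hw]
          rw [SimpleGraph.Walk.edges_append, hps]
          simp
        have hev : e = s(w,v) := by
          rw [hPe] at hlast
          have : some s(w,v) = some e := by simpa using hlast
          exact (Option.some.injEq _ _ ▸ this).symm
        rw [hev, Sym2.eq_swap] at hR
        tauto
      · apply hmax w h
        obtain ⟨a, t, hat⟩ := List.exists_cons_of_ne_nil hlen
        refine ⟨?_, ?_, ?_⟩
        · rw [← SimpleGraph.Walk.isPath_reverse_iff, SimpleGraph.Walk.reverse_concat]
          apply SimpleGraph.Walk.IsPath.cons
          · rwa [SimpleGraph.Walk.isPath_reverse_iff]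
          · rwa [SimpleGraph.Walk.support_reverse, List.mem_reverse]
        · intro f hf
          apply halt.1 f
          rw [SimpleGraph.Walk.edges_concat, List.concat_eq_append, hat] at hf
          rw [hat]
          simpa using hf
        · rw [SimpleGraph.Walk.edges_concat, List.concat_eq_append]
          apply List.IsChain.append halt.2 (List.isChain_singleton _)
          intro x hx y hy
          simp only [List.head?_cons, Option.mem_def, Option.some.injEq] at hy
          rw [hlast] at hx
          simp only [Option.mem_def, Option.some.injEq] at hx
          subst hx
          subst hy
          exact hR
    by_cases heM : e ∈ M.edgeSet
    · obtain ⟨w, hwmem, hwu⟩ := Finset.exists_mem_ne (s := G.neighborFinset v)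
        (by rw [← G.card_neighborFinset_eq_degree] at h2; omega) u
      have hadj' : G.Adj v w := by rwa [SimpleGraph.mem_neighborFinset] at hwmem
      have hf : s(v,w) ∉ M.edgeSet := fun hmem =>
        hwu (huuniq w (SimpleGraph.Subgraph.mem_edgeSet.mp hmem))
      exact key w hadj' (iff_of_true heM hf)
    · have hadj' : G.Adj v u := M.adj_sub huAdj
      have hf : s(v,u) ∈ M.edgeSet := SimpleGraph.Subgraph.mem_edgeSet.mpr huAdj
      exact key u hadj' (iff_of_false heM (not_not_intro hf))
end

section
/- Let T be a finite tree and S a set of leaves of T. Among all functions f matching each leaf in S injectively to distinct internal edges of T (an internal edge being one not incident to any leaf), any f minimizing the total sum over s ∈ S of the tree-distance from s to f(s) has the property: for each s ∈ S, every internal edge on the path in T from s to f(s) also lies in the image of f. -/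
/-- The distance in a graph from a vertex `s` to an edge `e`: the distance to the
nearer endpoint of `e`. -/
noncomputable def edgeDist {V : Type*} (G : SimpleGraph V) (s : V) (e : Sym2 V) : ℕ :=
  Sym2.lift ⟨fun a b => min (G.dist s a) (G.dist s b),
    fun _ _ => min_comm _ _⟩ e

/-- An internal edge of a graph: an edge not incident to any leaf, i.e. both of whose
endpoints have degree at least 2. -/
def InternalEdge {V : Type*} [Fintype V] (G : SimpleGraph V) [DecidableRel G.Adj]
    (e : Sym2 V) : Prop :=
  e ∈ G.edgeSet ∧ ∀ v ∈ e, 2 ≤ G.degree v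

lemma aux_edgeDist_lt_length {V : Type*} (G : SimpleGraph V) (hc : G.Connected)
    {s t : V} (p : G.Walk s t) : ∀ e' ∈ p.edges, edgeDist G s e' < p.length := by
  induction p with
  | nil => simp
  | @cons a b c h q ih =>
    intro e' he'
    rw [SimpleGraph.Walk.edges_cons, List.mem_cons] at he'
    rcases he' with rfl | he'
    · simp [edgeDist, SimpleGraph.dist_self]
    · have h1 := ih e' he'
      have h2 : edgeDist G a e' ≤ 1 + edgeDist G b e' := by
        induction e' using Sym2.ind with
        | _ x y =>
          simp only [edgeDist, Sym2.lift_mk]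
          have hab : G.dist a b = 1 := SimpleGraph.dist_eq_one_iff_adj.2 h
          have tx : G.dist a x ≤ 1 + G.dist b x := by
            calc G.dist a x ≤ G.dist a b + G.dist b x := hc.dist_triangle
            _ = 1 + G.dist b x := by rw [hab]
          have ty : G.dist a y ≤ 1 + G.dist b y := by
            calc G.dist a y ≤ G.dist a b + G.dist b y := hc.dist_triangle
            _ = 1 + G.dist b y := by rw [hab]
          rcases min_cases (G.dist b x) (G.dist b y) with ⟨hm, _⟩ | ⟨hm, _⟩ <;> rw [hm]
          · exact le_trans (min_le_left _ _) tx
          · exact le_trans (min_le_right _ _) ty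
      rw [SimpleGraph.Walk.length_cons]
      omega

lemma aux_path_length_eq_dist {V : Type*} [DecidableEq V] {G : SimpleGraph V} (hG : G.IsTree)
    {s t : V} (p : G.Walk s t) (hp : p.IsPath) : p.length = G.dist s t := by
  obtain ⟨w, hw⟩ := hG.isConnected.exists_walk_length_eq_dist s t
  have heq := (hG.existsUnique_path s t).unique hp w.bypass_isPath
  have h1 : p.length ≤ w.length := heq ▸ w.length_bypass_le
  exact le_antisymm (hw ▸ h1) (SimpleGraph.dist_le p)

/-- Let `T` be a finite tree, `S` a set of leaves, and `Avail` the availability relation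
of an assignment problem matching leaves to internal edges (availability being closed
under moving along the path towards the leaf). Any admissible injective assignment `f`
minimizing the total tree-distance from each `s ∈ S` to `f s` has the property that every
internal edge on the path in `T` from `s` to `f s` lies in the image of `f`. -/
theorem stmt_17 {V : Type*} [Fintype V] [DecidableEq V] (G : SimpleGraph V)
    [DecidableRel G.Adj] (hG : G.IsTree)
    (S : Finset V) (hS : ∀ s ∈ S, G.degree s = 1)
    (Avail : V → Sym2 V → Prop)
    (hAvailInt : ∀ s ∈ S, ∀ e : Sym2 V, Avail s e → InternalEdge G e)
    (hAvailPath : ∀ s ∈ S, ∀ e : Sym2 V, Avail s e → ∀ t : V, t ∈ e →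
      ∀ p : G.Walk s t, p.IsPath → e ∉ p.edges →
        ∀ e' ∈ p.edges, InternalEdge G e' → Avail s e')
    (f : V → Sym2 V) (hf : ∀ s ∈ S, Avail s (f s)) (hinj : Set.InjOn f ↑S)
    (hmin : ∀ g : V → Sym2 V, (∀ s ∈ S, Avail s (g s)) → Set.InjOn g ↑S →
      ∑ s ∈ S, edgeDist G s (f s) ≤ ∑ s ∈ S, edgeDist G s (g s)) :
    ∀ s ∈ S, ∀ t : V, t ∈ f s → ∀ p : G.Walk s t, p.IsPath → f s ∉ p.edges →
      ∀ e' ∈ p.edges, InternalEdge G e' → e' ∈ f '' ↑S := by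
  intro s hs t ht p hp hfp e' he' hInt
  by_contra hnot
  have hfe : f s ∈ G.edgeSet := (hAvailInt s hs (f s) (hf s hs)).1
  set t' := Sym2.Mem.other ht with ht'
  have hts : s(t, t') = f s := Sym2.other_spec ht
  have hadj : G.Adj t t' := by
    rw [← SimpleGraph.mem_edgeSet, hts]; exact hfe
  obtain ⟨r, hrp, -⟩ := hG.existsUnique_path s t'
  have hle : G.dist s t ≤ G.dist s t' := by
    by_cases hmem : t ∈ r.support
    · have h1 : (r.takeUntil t hmem).IsPath := hrp.takeUntil hmem
      have h2 := aux_path_length_eq_dist hG _ h1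
      have h3 := r.length_takeUntil_le hmem
      have h4 := aux_path_length_eq_dist hG r hrp
      omega
    · have hr' : (SimpleGraph.Walk.cons hadj r.reverse).reverse.IsPath := by
        apply SimpleGraph.Walk.IsPath.reverse
        rw [SimpleGraph.Walk.cons_isPath_iff]
        exact ⟨hrp.reverse, by simpa using hmem⟩
      have heq : p = (SimpleGraph.Walk.cons hadj r.reverse).reverse :=
        (hG.existsUnique_path s t).unique hp hr'
      exfalso; apply hfp
      rw [heq, SimpleGraph.Walk.edges_reverse, List.mem_reverse,
        SimpleGraph.Walk.edges_cons]
      exact List.mem_cons.2 (Or.inl hts.symm)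
  have hplen : p.length = G.dist s t := aux_path_length_eq_dist hG p hp
  have hfs_dist : edgeDist G s (f s) = G.dist s t := by
    rw [← hts]
    simpa [edgeDist] using min_eq_left hle
  have hlt : edgeDist G s e' < edgeDist G s (f s) := by
    have := aux_edgeDist_lt_length G hG.isConnected p e' he'
    omega
  set g : V → Sym2 V := Function.update f s e' with hg
  have hgs : g s = e' := Function.update_self _ _ _
  have hgo : ∀ x, x ≠ s → g x = f x := fun x hx => Function.update_of_ne hx _ _
  have hgavail : ∀ x ∈ S, Avail x (g x) := by
    intro x hx
    by_cases hxs : x = s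
    · subst hxs
      rw [hgs]
      exact hAvailPath x hx (f x) (hf x hx) t ht p hp hfp e' he' hInt
    · rw [hgo x hxs]; exact hf x hx
  have hginj : Set.InjOn g ↑S := by
    intro a ha b hb hab
    by_cases has : a = s <;> by_cases hbs : b = s
    · rw [has, hbs]
    · exfalso; apply hnot
      subst has
      rw [hgs, hgo b hbs] at hab
      exact ⟨b, hb, hab.symm⟩
    · exfalso; apply hnot
      subst hbs
      rw [hgs, hgo a has] at hab
      exact ⟨a, ha, hab⟩
    · exact hinj ha hb (by rw [← hgo a has, ← hgo b hbs]; exact hab)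
  have hmg := hmin g hgavail hginj
  have hsum : ∑ x ∈ S, edgeDist G x (g x) < ∑ x ∈ S, edgeDist G x (f x) := by
    apply Finset.sum_lt_sum
    · intro i hi
      by_cases his : i = s
      · subst his; rw [hgs]; exact hlt.le
      · rw [hgo i his]
    · exact ⟨s, hs, by rw [hgs]; exact hlt⟩
  omega
end
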